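/- arXiv:1206.3692 — 4 statements merged into one kernel-verified Lean document; each statement's English description precedes it below -/
import Mathlib

section
/- Let S be a compact metric space and f : S → S a homeomorphism such that the family of iterates {fⁿ : n ∈ ℤ} is relatively compact in C(S,S) for the topology of uniform convergence. Then there exists a strictly increasing sequence (m_k) of positive integers such that f^{m_k} converges uniformly on S to the identity map of S. -/
open Filter Topology

/-!
For `p ≤ q`, precomposing with `f⁻ᵖ` shows that the uniform distance from `f^(q - p)` to the
identity is at most the uniform distance between `f^q` and `f^p`. Relative compactness gives a
Cauchy subsequence of `(fⁿ)ₙ`, so the identity is a cluster point of the iterates `fᵐ` as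
`m → ∞`, and a first countable space turns a cluster point into a limit of a subsequence.
-/

namespace Homeomorph

theorem coe_pow_eq_toEquiv_pow {X : Type*} [TopologicalSpace X] (f : X ≃ₜ X) (n : ℕ) :
    ⇑(f ^ n) = ⇑(f.toEquiv ^ n) := by
  induction n with
  | zero => rfl
  | succ n ih => rw [pow_succ, pow_succ, Equiv.Perm.coe_mul, ← ih]; rfl

variable {S : Type*} [MetricSpace S] [CompactSpace S]

theorem dist_mul_inv_id_le (g h : S ≃ₜ S) :
    dist ((g * h⁻¹ : S ≃ₜ S) : C(S, S)) (ContinuousMap.id S) ≤ dist (g : C(S, S)) h :=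
  (ContinuousMap.dist_le dist_nonneg).2 fun x => by
    simpa using ContinuousMap.dist_apply_le_dist (f := (g : C(S, S))) (g := h) (h.symm x)

theorem mapClusterPt_id_pow (f : S ≃ₜ S) {K : Set C(S, S)} (hK : IsCompact K)
    (hfK : ∀ n : ℕ, ((f ^ n : S ≃ₜ S) : C(S, S)) ∈ K) :
    MapClusterPt (ContinuousMap.id S) atTop (fun n : ℕ => ((f ^ n : S ≃ₜ S) : C(S, S))) := by
  obtain ⟨L, -, φ, hφ, hlim⟩ := hK.tendsto_subseq hfK
  rw [Metric.nhds_basis_ball.mapClusterPt_iff_frequently]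
  intro ε hε
  obtain ⟨N, hN⟩ := Metric.cauchySeq_iff'.1 hlim.cauchySeq ε hε
  have hN_le : N ≤ φ N := hφ.id_le N
  refine frequently_atTop.2 fun a => ⟨φ (φ N + a) - φ N, ?_, ?_⟩
  · have : φ N + a ≤ φ (φ N + a) := hφ.id_le _
    omega
  · have hle : φ N ≤ φ (φ N + a) := hφ.monotone (by omega)
    rw [Metric.mem_ball, pow_sub f hle]
    exact (dist_mul_inv_id_le _ _).trans_lt (hN (φ N + a) (by omega))

end Homeomorph

/-- if `S` is a compact metric space and `f : S → S` is a homeomorphism whose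
family of iterates `{fⁿ : n ∈ ℤ}` is relatively compact in `C(S,S)` for the topology of
uniform convergence, then some subsequence `f^{m_k}` with `m_k` strictly increasing positive
integers converges uniformly to the identity of `S`. -/
theorem stmt2 (S : Type*) [MetricSpace S] [CompactSpace S] (f : S ≃ₜ S)
    (hrc : IsCompact (closure {h : C(S, S) | ∃ n : ℤ, ⇑h = ⇑(f.toEquiv ^ n)})) :
    ∃ m : ℕ → ℕ, StrictMono m ∧ (∀ k, 0 < m k) ∧
      TendstoUniformly (fun k => ⇑(f.toEquiv ^ (m k : ℤ))) id atTop := by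
  have hf_mem (n : ℕ) :
      ((f ^ n : S ≃ₜ S) : C(S, S)) ∈ closure {h : C(S, S) | ∃ n : ℤ, ⇑h = ⇑(f.toEquiv ^ n)} :=
    subset_closure ⟨n, by rw [zpow_natCast]; exact f.coe_pow_eq_toEquiv_pow n⟩
  obtain ⟨ψ, hψ, hlim⟩ := (f.mapClusterPt_id_pow hrc hf_mem).tendsto_subseq
  -- dropping the first term makes every exponent positive
  refine ⟨fun k => ψ (k + 1), hψ.comp (strictMono_nat_of_lt_succ fun k => Nat.lt_succ_self (k + 1)),
    fun k => (Nat.succ_pos k).trans_le (hψ.id_le _), ?_⟩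
  have := ContinuousMap.tendsto_iff_tendstoUniformly.1 (hlim.comp (tendsto_add_atTop_nat 1))
  simpa [Function.comp_def, Homeomorph.coe_pow_eq_toEquiv_pow] using this
end

section
/- Let x ∈ ℂ with |x| = 1 and x ∉ {i, −i}, and let t ∈ ℝ with 1 − tx ≠ 0. If the complex number w = (x + t)/(1 − tx) satisfies |w| = 1, then w = x or w = −1/x. (That is, the orbit of a point x of the unit circle other than ±i under the real Möbius transformations x ↦ (x+t)/(1−tx), t ∈ ℝ, meets the unit circle only at x and −1/x.) -/
/-! Both `‖x + t‖²` and `‖1 - t x‖²` equal `1 + t²` up to the term `± 2 t Re x`, so equality of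
the two norms forces `t = 0`, where `R_t` is the identity, or `Re x = 0`, i.e. `x = ±i`.
The second point `-1/x` is the image of `x` under `R_∞`, which is not among the `R_t`, `t ∈ ℝ`. -/

namespace Complex

theorem normSq_add_ofReal_sub_normSq_one_sub_ofReal_mul (x : ℂ) (t : ℝ) :
    normSq (x + t) - normSq (1 - t * x) = (1 - t ^ 2) * (normSq x - 1) + 4 * t * x.re := by
  simp only [normSq_apply, add_re, add_im, sub_re, sub_im, one_re, one_im, mul_re, mul_im,
    ofReal_re, ofReal_im]
  ring

theorem mul_re_eq_zero_of_norm_add_ofReal_eq {x : ℂ} (hx : ‖x‖ = 1) {t : ℝ}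
    (h : ‖x + t‖ = ‖1 - t * x‖) : t * x.re = 0 := by
  have hsq : normSq x = 1 := by rw [normSq_eq_norm_sq, hx, one_pow]
  have hdiff := normSq_add_ofReal_sub_normSq_one_sub_ofReal_mul x t
  rw [normSq_eq_norm_sq, normSq_eq_norm_sq (1 - _), h, hsq, sub_self] at hdiff
  linarith

theorem eq_I_or_eq_neg_I_of_norm_eq_one_of_re_eq_zero {x : ℂ} (hx : ‖x‖ = 1) (hre : x.re = 0) :
    x = I ∨ x = -I := by
  have him : |x.im| = 1 := by rwa [norm_eq_sqrt_sq_add_sq, hre, zero_pow two_ne_zero, zero_add,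
    Real.sqrt_sq_eq_abs] at hx
  rcases abs_eq (zero_le_one' ℝ) |>.1 him with h | h
  · exact .inl (ext hre (by simp [h]))
  · exact .inr (ext (by simp [hre]) (by simp [h]))

end Complex

theorem stmt8_general (x : ℂ) (hx : ‖x‖ = 1) (hxi : x ≠ Complex.I) (hxi' : x ≠ -Complex.I)
    (t : ℝ)
    (hw : ‖(x + (t : ℂ)) / (1 - (t : ℂ) * x)‖ = 1) :
    (x + (t : ℂ)) / (1 - (t : ℂ) * x) = x ∨ (x + (t : ℂ)) / (1 - (t : ℂ) * x) = -1 / x := by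
  have hden : 1 - (t : ℂ) * x ≠ 0 := by
    rintro h
    simp [h] at hw
  rw [norm_div, div_eq_one_iff_eq (norm_ne_zero_iff.2 hden)] at hw
  left
  rcases mul_eq_zero.1 (Complex.mul_re_eq_zero_of_norm_add_ofReal_eq hx hw) with rfl | hre
  · simp
  · rcases Complex.eq_I_or_eq_neg_I_of_norm_eq_one_of_re_eq_zero hx hre with rfl | rfl <;> contradiction

/-- if `|x| = 1`, `x ≠ ±i`, `t ∈ ℝ`, `1 - tx ≠ 0` and the image
`w = (x+t)/(1-tx)` of `x` under the real Möbius transformation `R_t` lies on the unit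
circle, then `w = x` or `w = -1/x`. -/
theorem stmt8 (x : ℂ) (hx : ‖x‖ = 1) (hxi : x ≠ Complex.I) (hxi' : x ≠ -Complex.I)
    (t : ℝ) (ht : 1 - (t : ℂ) * x ≠ 0)
    (hw : ‖(x + (t : ℂ)) / (1 - (t : ℂ) * x)‖ = 1) :
    (x + (t : ℂ)) / (1 - (t : ℂ) * x) = x ∨ (x + (t : ℂ)) / (1 - (t : ℂ) * x) = -1 / x :=
  stmt8_general x hx hxi hxi' t hw
end

section
/- Let d ≥ 1 and n ≥ 2 be integers and t ∈ ℝ. (i) If p ∈ ℂ satisfies p^{2d} = −1 and 1 − tp ≠ 0, then the complex number w = (p + t)/(1 − tp) satisfies w^{2d} + (2/n)w^d + 1 ≠ 0. (ii) If z ∈ ℂ satisfies z^{2d} + (2/n)z^d + 1 = 0 and 1 − tz ≠ 0, then the complex number v = (z + t)/(1 − tz) satisfies v^{2d} ≠ −1. (That is, no real Möbius transformation x ↦ (x+t)/(1−tx) maps a root of X^{2d}+1 to a root of X^{2d}+(2/n)X^d+1, nor conversely.) -/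
open Complex

/-- Any root of `u^2 + (2/n) u + 1` has `normSq = 1`. -/
lemma quad_normSq (n : ℕ) (hn : 2 ≤ n) (u : ℂ)
    (h : u ^ 2 + (2 / (n : ℂ)) * u + 1 = 0) : Complex.normSq u = 1 := by
  have hn0 : (n : ℝ) ≠ 0 := by positivity
  have hle : (1 / (n : ℝ)) ^ 2 ≤ 1 := by
    rw [div_pow, one_pow, div_le_one (by positivity)]
    have : (2:ℝ) ≤ (n:ℝ) := by exact_mod_cast hn
    nlinarith
  set s : ℝ := Real.sqrt (1 - (1 / (n : ℝ)) ^ 2) with hs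
  have hs2 : s ^ 2 = 1 - (1 / (n : ℝ)) ^ 2 := by
    rw [hs, Real.sq_sqrt (by linarith)]
  set a : ℂ := ⟨-(1 / (n : ℝ)), s⟩ with ha
  have hadd : a + starRingEnd ℂ a = -(2 / (n : ℂ)) := by
    rw [Complex.add_conj]
    have : a.re = -(1 / (n : ℝ)) := rfl
    rw [this]
    push_cast
    ring
  have hmul : a * starRingEnd ℂ a = 1 := by
    rw [Complex.mul_conj]
    have : Complex.normSq a = (1 / (n : ℝ)) ^ 2 + s ^ 2 := by
      simp [Complex.normSq_apply, ha]; ring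
    rw [this, hs2]
    push_cast
    ring
  have hfac : (u - a) * (u - starRingEnd ℂ a) = 0 := by
    have : (u - a) * (u - starRingEnd ℂ a)
        = u ^ 2 - (a + starRingEnd ℂ a) * u + a * starRingEnd ℂ a := by ring
    rw [this, hadd, hmul, ← h]; ring
  have hna : Complex.normSq a = 1 := by
    have := hmul
    rw [Complex.mul_conj] at this
    exact_mod_cast this
  rcases mul_eq_zero.mp hfac with h1 | h1
  · rw [sub_eq_zero.mp h1]; exact hna
  · rw [sub_eq_zero.mp h1, Complex.normSq_conj]; exact hna
/-- If `z` is on the unit circle and its Möbius image is on the unit circle,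
then the Möbius map fixes `z`. -/
lemma mobius_fix (t : ℝ) (z : ℂ) (hz : Complex.normSq z = 1)
    (hden : 1 - (t : ℂ) * z ≠ 0)
    (hw : Complex.normSq ((z + (t : ℂ)) / (1 - (t : ℂ) * z)) = 1) :
    (z + (t : ℂ)) / (1 - (t : ℂ) * z) = z := by
  have hdiv : Complex.normSq (z + (t : ℂ)) = Complex.normSq (1 - (t : ℂ) * z) := by
    have h1 : Complex.normSq (1 - (t : ℂ) * z) ≠ 0 := by
      simpa [Complex.normSq_eq_zero] using hden
    have := hw
    rw [map_div₀, div_eq_one_iff_eq h1] at this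
    exact this
  have hre : t * z.re = 0 := by
    have h1 : Complex.normSq (z + (t : ℂ)) = z.re ^ 2 + 2 * t * z.re + t ^ 2 + z.im ^ 2 := by
      simp [Complex.normSq_apply]; ring
    have h2 : Complex.normSq (1 - (t : ℂ) * z)
        = 1 - 2 * t * z.re + t ^ 2 * (z.re ^ 2 + z.im ^ 2) := by
      simp [Complex.normSq_apply]; ring
    have hz' : z.re ^ 2 + z.im ^ 2 = 1 := by
      have := hz; rw [Complex.normSq_apply] at this; nlinarith [this]
    rw [h1, h2, hz'] at hdiv
    nlinarith [hdiv, hz']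
  rcases mul_eq_zero.mp hre with ht | hzre
  · rw [ht] at *
    simp
  · -- z.re = 0 and normSq z = 1, so z^2 = -1
    have him : z.im ^ 2 = 1 := by
      rw [Complex.normSq_apply, hzre] at hz; nlinarith [hz]
    have hz2 : z ^ 2 = -1 := by
      have : z = (z.im : ℂ) * Complex.I := by
        apply Complex.ext <;> simp [hzre]
      rw [this]
      rw [mul_pow, Complex.I_sq]
      have : ((z.im : ℂ)) ^ 2 = 1 := by exact_mod_cast him
      rw [this]; ring
    rw [div_eq_iff hden]
    have : z * (1 - (t : ℂ) * z) = z - (t : ℂ) * z ^ 2 := by ring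
    rw [this, hz2]; ring

/-- no real Möbius transformation `x ↦ (x+t)/(1-tx)` maps a root of
`X^(2d) + 1` to a root of `X^(2d) + (2/n) X^d + 1`, nor conversely. -/
theorem stmt9 (d n : ℕ) (hd : 1 ≤ d) (hn : 2 ≤ n) (t : ℝ) :
    (∀ p : ℂ, p ^ (2 * d) = -1 → 1 - (t : ℂ) * p ≠ 0 →
        ((p + (t : ℂ)) / (1 - (t : ℂ) * p)) ^ (2 * d)
            + (2 / (n : ℂ)) * ((p + (t : ℂ)) / (1 - (t : ℂ) * p)) ^ d + 1 ≠ 0) ∧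
      (∀ z : ℂ, z ^ (2 * d) + (2 / (n : ℂ)) * z ^ d + 1 = 0 → 1 - (t : ℂ) * z ≠ 0 →
        ((z + (t : ℂ)) / (1 - (t : ℂ) * z)) ^ (2 * d) ≠ -1) := by
  have hn0 : (n : ℂ) ≠ 0 := by
    exact_mod_cast Nat.cast_ne_zero.mpr (by omega)
  have h2n : (2 / (n : ℂ)) ≠ 0 := by
    apply div_ne_zero two_ne_zero hn0
  have hd0 : d ≠ 0 := by omega
  -- normSq of x with x^(2d) = -1 is 1
  have hroot1 : ∀ x : ℂ, x ^ (2 * d) = -1 → Complex.normSq x = 1 := by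
    intro x hx
    have h1 : Complex.normSq x ^ (2 * d) = 1 := by
      rw [← map_pow, hx]; simp
    have h2 : (0:ℝ) ≤ Complex.normSq x := Complex.normSq_nonneg x
    have := (pow_left_inj₀ h2 zero_le_one (by omega : 2*d ≠ 0)).mp (by simpa using h1)
    exact this
  -- normSq of a root of the trinomial is 1
  have hroot2 : ∀ x : ℂ, x ^ (2 * d) + (2 / (n : ℂ)) * x ^ d + 1 = 0 → Complex.normSq x = 1 := by
    intro x hx
    have hu : (x ^ d) ^ 2 + (2 / (n : ℂ)) * x ^ d + 1 = 0 := by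
      rw [← pow_mul, mul_comm d 2]; exact hx
    have h1 : Complex.normSq x ^ d = 1 := by
      have := quad_normSq n hn (x ^ d) hu
      rwa [map_pow] at this
    exact (pow_left_inj₀ (Complex.normSq_nonneg x) zero_le_one hd0).mp (by simpa using h1)
  constructor
  · intro p hp hden hcon
    set w : ℂ := (p + (t : ℂ)) / (1 - (t : ℂ) * p) with hw
    have hnp : Complex.normSq p = 1 := hroot1 p hp
    have hnw : Complex.normSq w = 1 := hroot2 w hcon
    have hfix : w = p := mobius_fix t p hnp hden hnw
    rw [hfix, hp] at hcon
    have hpd : p ^ d = 0 := by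
      have : (2 / (n : ℂ)) * p ^ d = 0 := by linear_combination hcon
      exact (mul_eq_zero.mp this).resolve_left h2n
    have : Complex.normSq p ^ d = 0 := by rw [← map_pow, hpd]; simp
    rw [hnp] at this
    simp at this
  · intro z hz hden hcon
    set v : ℂ := (z + (t : ℂ)) / (1 - (t : ℂ) * z) with hv
    have hnz : Complex.normSq z = 1 := hroot2 z hz
    have hnv : Complex.normSq v = 1 := hroot1 v hcon
    have hfix : v = z := mobius_fix t z hnz hden hnv
    rw [hfix] at hcon
    rw [hcon] at hz
    have hzd : z ^ d = 0 := by
      have : (2 / (n : ℂ)) * z ^ d = 0 := by linear_combination hz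
      exact (mul_eq_zero.mp this).resolve_left h2n
    have : Complex.normSq z ^ d = 0 := by rw [← map_pow, hzd]; simp
    rw [hnz] at this
    simp at this
end

section
/- Every infinite compact abelian subgroup G of GL₂(ℝ) is conjugate in GL₂(ℝ) to the rotation group SO₂(ℝ): there exists P ∈ GL₂(ℝ) with P·G·P⁻¹ = SO₂(ℝ). -/
/-!
Elements of a compact subgroup of `GL₂(ℝ)` have bounded powers and determinant `±1`, so their real
eigenvalues have modulus one. An infinite compact group contains elements `u ≠ 1` arbitrarily close
to `1`, in particular with positive trace; if such a `u` had real eigenvalues they would both be `1`,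
so `(u - 1)² = 0`, and the powers `uᵏ = 1 + k (u - 1)` stay bounded only if `u = 1`. Hence `u` is
conjugate to a nontrivial rotation `R`. After this conjugation every element of the group commutes
with `R`, so it has the form `[a, -b; b, a]` with `a² + b² = 1`: it is a rotation. The angles of the
resulting closed subgroup of `SO₂(ℝ)` form an additive subgroup of `ℝ` containing `2π`; it cannot be
cyclic since the group is infinite, so it is dense and the group is all of `SO₂(ℝ)`.
-/

open Matrix Real Filter Topology Bornology Set Polynomial

lemma eq_zero_of_isBounded_range_smul {E : Type*} [NormedAddCommGroup E] [NormedSpace ℝ E]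
    {c : ℕ → ℝ} (hc : Tendsto (fun k => |c k|) atTop atTop) {x : E}
    (hx : IsBounded (range fun k => c k • x)) : x = 0 := by
  obtain ⟨C, hC⟩ := isBounded_iff_forall_norm_le.1 hx
  by_contra h
  obtain ⟨k, hk⟩ := (hc.eventually_gt_atTop (C / ‖x‖)).exists
  have hCk := hC _ ⟨k, rfl⟩
  rw [norm_smul, Real.norm_eq_abs] at hCk
  rw [div_lt_iff₀ (norm_pos_iff.2 h)] at hk
  linarith

lemma abs_le_one_of_isBounded_range_pow_smul {E : Type*} [NormedAddCommGroup E]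
    [NormedSpace ℝ E] {l : ℝ} {x : E} (hx : x ≠ 0)
    (h : IsBounded (range fun k : ℕ => l ^ k • x)) : |l| ≤ 1 := by
  by_contra! hl
  refine hx (eq_zero_of_isBounded_range_smul ?_ h)
  simpa only [abs_pow] using tendsto_pow_atTop_atTop_of_one_lt hl

lemma Real.exists_cos_eq_and_sin_eq {p q : ℝ} (h : p ^ 2 + q ^ 2 = 1) :
    ∃ θ, cos θ = p ∧ sin θ = q := by
  obtain ⟨θ, hθ⟩ := (Complex.norm_eq_one_iff ⟨p, q⟩).1
    (by rw [Complex.norm_def, Complex.normSq_mk, ← sq, ← sq, h, sqrt_one])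
  exact ⟨θ, by simpa using congrArg Complex.re hθ, by simpa using congrArg Complex.im hθ⟩

lemma Subgroup.exists_mem_ne_one_mem_of_isCompact {G : Type*} [Group G] [TopologicalSpace G]
    [IsTopologicalGroup G] {H : Subgroup G} (hK : IsCompact (H : Set G))
    (hinf : (H : Set G).Infinite) {U : Set G} (hU : U ∈ 𝓝 1) : ∃ u ∈ H, u ≠ 1 ∧ u ∈ U := by
  by_contra! hHU
  obtain ⟨V, hVU, hV, h1V⟩ := mem_nhds_iff.1 hU
  have hsingleton : ({1} : Set H) = Subtype.val ⁻¹' V := by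
    ext u
    refine ⟨fun hu => hu ▸ h1V, fun hu => ?_⟩
    by_contra hu1
    exact hHU u u.2 (fun h => hu1 (Subtype.ext h)) (hVU hu)
  have : DiscreteTopology H := discreteTopology_of_isOpen_singleton_one
    (hsingleton ▸ hV.preimage continuous_subtype_val)
  exact hinf (hK.finite (isDiscrete_iff_discreteTopology.2 this))

namespace Matrix

section PowerBounded

variable {ι : Type*} [Fintype ι] [DecidableEq ι] {A : Matrix ι ι ℝ} {K : Set (Matrix ι ι ℝ)}

lemma isBounded_range_pow_mulVec (hK : IsCompact K) (hA : ∀ k : ℕ, A ^ k ∈ K) (v : ι → ℝ) :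
    IsBounded (range fun k : ℕ => A ^ k *ᵥ v) :=
  (hK.image (f := (· *ᵥ v)) (by fun_prop)).isBounded.subset
    (range_subset_iff.2 fun k => mem_image_of_mem _ (hA k))

lemma pow_eq_one_add_smul_of_sub_one_sq_eq_zero (h : (A - 1) ^ 2 = 0) (k : ℕ) :
    A ^ k = 1 + (k : ℝ) • (A - 1) := by
  obtain ⟨N, rfl⟩ : ∃ N, A = 1 + N := ⟨A - 1, by abel⟩
  rw [add_sub_cancel_left] at h ⊢
  induction k with
  | zero => simp
  | succ k ih =>
    rw [pow_succ, ih]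
    simp only [add_mul, mul_add, one_mul, mul_one, smul_mul_assoc, ← sq, h, smul_zero, add_zero]
    push_cast
    rw [add_smul, one_smul]
    abel

lemma eq_one_of_sub_one_sq_eq_zero (hK : IsCompact K) (hA : ∀ k : ℕ, A ^ k ∈ K)
    (h : (A - 1) ^ 2 = 0) : A = 1 := by
  rw [← sub_eq_zero, ext_iff_mulVec]
  intro v
  obtain ⟨C, hC⟩ := isBounded_iff_forall_norm_le.1 (isBounded_range_pow_mulVec hK hA v)
  rw [zero_mulVec]
  refine eq_zero_of_isBounded_range_smul (c := Nat.cast)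
    (by simpa using tendsto_natCast_atTop_atTop) (isBounded_iff_forall_norm_le.2 ⟨C + ‖v‖, ?_⟩)
  rintro _ ⟨k, rfl⟩
  have hk : (k : ℝ) • ((A - 1) *ᵥ v) = A ^ k *ᵥ v - v := by
    rw [pow_eq_one_add_smul_of_sub_one_sq_eq_zero h, add_mulVec, one_mulVec, smul_mulVec,
      add_sub_cancel_left]
  dsimp only
  rw [hk]
  exact (norm_sub_le _ _).trans (add_le_add_left (hC _ ⟨k, rfl⟩) _)

lemma exists_mulVec_eq_smul_of_isRoot_charpoly {l : ℝ} (h : A.charpoly.IsRoot l) :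
    ∃ v ≠ 0, A *ᵥ v = l • v := by
  rw [Polynomial.IsRoot.def, eval_charpoly, ← exists_mulVec_eq_zero_iff] at h
  obtain ⟨v, hv, hlv⟩ := h
  refine ⟨v, hv, ?_⟩
  rw [sub_mulVec, scalar_apply, ← smul_one_eq_diagonal, smul_mulVec, one_mulVec,
    sub_eq_zero] at hlv
  exact hlv.symm

lemma abs_le_one_of_mulVec_eq_smul (hK : IsCompact K) (hA : ∀ k : ℕ, A ^ k ∈ K)
    {v : ι → ℝ} (hv : v ≠ 0) {l : ℝ} (hl : A *ᵥ v = l • v) : |l| ≤ 1 := by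
  refine abs_le_one_of_isBounded_range_pow_smul hv
    ((isBounded_range_pow_mulVec hK hA v).subset ?_)
  rintro _ ⟨k, rfl⟩
  refine ⟨k, show A ^ k *ᵥ v = l ^ k • v from ?_⟩
  induction k with
  | zero => simp
  | succ k ih => rw [pow_succ', ← mulVec_mulVec, ih, mulVec_smul, hl, smul_smul, pow_succ]

end PowerBounded

lemma sub_one_sq_eq_zero_of_trace_eq_two_of_det_eq_one {A : Matrix (Fin 2) (Fin 2) ℝ}
    (ht : A.trace = 2) (hd : A.det = 1) : (A - 1) ^ 2 = 0 := by
  have hCH := aeval_self_charpoly A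
  rw [charpoly_fin_two, ht, hd] at hCH
  simp only [map_add, map_sub, map_pow, aeval_X, map_mul, aeval_C, map_one,
    Algebra.algebraMap_eq_smul_one, two_smul] at hCH
  rw [← hCH]
  noncomm_ring

namespace GeneralLinearGroup

lemma abs_det_eq_one_of_isCompact {ι : Type*} [Fintype ι] [DecidableEq ι]
    {K : Subgroup (GL ι ℝ)} (hK : IsCompact (K : Set (GL ι ℝ))) {g : GL ι ℝ} (hg : g ∈ K) :
    |(g : Matrix ι ι ℝ).det| = 1 := by
  have hle : ∀ h ∈ K, |(h : Matrix ι ι ℝ).det| ≤ 1 := fun h hh =>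
    abs_le_one_of_isBounded_range_pow_smul one_ne_zero <|
      (hK.image (f := fun g : GL ι ℝ => (g : Matrix ι ι ℝ).det) (by fun_prop)).isBounded.subset
        (range_subset_iff.2 fun k => ⟨h ^ k, K.pow_mem hh k, by simp [det_pow]⟩)
  have hmul : |(g : Matrix ι ι ℝ).det| * |((g⁻¹ : GL ι ℝ) : Matrix ι ι ℝ).det| = 1 := by
    rw [← abs_mul, ← det_mul, ← Units.val_mul, mul_inv_cancel, Units.val_one, det_one, abs_one]
  nlinarith [hle g hg, hle _ (K.inv_mem hg), abs_nonneg (g : Matrix ι ι ℝ).det]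

lemma trace_sq_lt_four_mul_det_of_isCompact {K : Subgroup (GL (Fin 2) ℝ)}
    (hK : IsCompact (K : Set (GL (Fin 2) ℝ))) {g : GL (Fin 2) ℝ} (hg : g ∈ K) (hg1 : g ≠ 1)
    (htr : 0 < (g : Matrix (Fin 2) (Fin 2) ℝ).trace) :
    (g : Matrix (Fin 2) (Fin 2) ℝ).trace ^ 2 < 4 * (g : Matrix (Fin 2) (Fin 2) ℝ).det := by
  set A := (g : Matrix (Fin 2) (Fin 2) ℝ)
  set t := A.trace
  set d := A.det
  have hAK : IsCompact (Units.val '' (K : Set (GL (Fin 2) ℝ))) := hK.image Units.continuous_val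
  have hpow : ∀ k : ℕ, A ^ k ∈ Units.val '' (K : Set (GL (Fin 2) ℝ)) :=
    fun k => ⟨g ^ k, K.pow_mem hg k, Units.val_pow_eq_pow_val g k⟩
  have hroot : ∀ l, l ^ 2 - t * l + d = 0 → |l| ≤ 1 := fun l hl => by
    obtain ⟨v, hv, hAv⟩ := exists_mulVec_eq_smul_of_isRoot_charpoly (A := A) (l := l)
      (by simpa [charpoly_fin_two] using hl)
    exact abs_le_one_of_mulVec_eq_smul hAK hpow hv hAv
  by_contra! hdisc
  set s := √(t ^ 2 - 4 * d)
  have hs : s ^ 2 = t ^ 2 - 4 * d := sq_sqrt (by linarith)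
  have hp := abs_le.1 (hroot ((t + s) / 2) (by linear_combination hs / 4))
  have hq := abs_le.1 (hroot ((t - s) / 2) (by linear_combination hs / 4))
  have hd1 : d = 1 := by
    rcases abs_eq zero_le_one |>.1 (abs_det_eq_one_of_isCompact hK hg) with h | h
    · exact h
    · nlinarith [mul_nonneg (sub_nonneg.2 hp.2) (sub_nonneg.2 hq.2)]
  have ht : t = 2 := by nlinarith [mul_nonneg (sub_nonneg.2 hp.2) (sub_nonneg.2 hq.2)]
  exact hg1 (Units.ext (eq_one_of_sub_one_sq_eq_zero hAK hpow
    (sub_one_sq_eq_zero_of_trace_eq_two_of_det_eq_one ht hd1)))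

noncomputable def rot (θ : ℝ) : GL (Fin 2) ℝ :=
  planeConformalMatrix (cos θ) (sin θ) (by rw [cos_sq_add_sin_sq]; exact one_ne_zero)

@[simp] lemma coe_rot (θ : ℝ) :
    (rot θ : Matrix (Fin 2) (Fin 2) ℝ) = !![cos θ, -sin θ; sin θ, cos θ] := rfl

lemma range_rot : range rot = {g : GL (Fin 2) ℝ |
    ∃ θ : ℝ, (g : Matrix (Fin 2) (Fin 2) ℝ) = !![cos θ, -sin θ; sin θ, cos θ]} := by
  ext g
  simp only [mem_range, mem_ofPred_eq, Units.ext_iff, coe_rot, eq_comm]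

lemma rot_add (θ φ : ℝ) : rot (θ + φ) = rot θ * rot φ := by
  ext i j
  fin_cases i <;> fin_cases j <;>
    simp only [Fin.zero_eta, Fin.mk_one, Units.val_mul, coe_rot, cos_add, sin_add, mul_apply,
      Fin.sum_univ_two, of_apply, cons_val', cons_val_zero, cons_val_one, cons_val_fin_one] <;> ring

noncomputable def rotHom : ℝ →+ Additive (GL (Fin 2) ℝ) :=
  AddMonoidHom.mk' (fun θ => Additive.ofMul (rot θ)) rot_add

lemma rot_neg (θ : ℝ) : rot (-θ) = (rot θ)⁻¹ :=
  congrArg Additive.toMul (map_neg rotHom θ)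

lemma rot_zsmul (k : ℤ) (θ : ℝ) : rot (k • θ) = rot θ ^ k :=
  congrArg Additive.toMul (map_zsmul rotHom k θ)

lemma rot_two_pi : rot (2 * π) = 1 := by
  ext i j
  fin_cases i <;> fin_cases j <;> simp

lemma continuous_rot : Continuous rot := by
  have hval : Continuous fun θ => (rot θ : Matrix (Fin 2) (Fin 2) ℝ) := by
    refine continuous_pi fun i => continuous_pi fun j => ?_
    fin_cases i <;> fin_cases j <;>
      simp only [Fin.zero_eta, Fin.mk_one, coe_rot, of_apply, cons_val', cons_val_zero, cons_val_one, cons_val_fin_one] <;> fun_prop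
  refine Units.continuous_iff.2 ⟨hval, ?_⟩
  simp only [← rot_neg]
  exact hval.comp continuous_neg

lemma mem_range_rot_of_commute {g : GL (Fin 2) ℝ} {θ : ℝ} (hθ : sin θ ≠ 0)
    (hcomm : Commute g (rot θ)) (hdet : |(g : Matrix (Fin 2) (Fin 2) ℝ).det| = 1) :
    g ∈ range rot := by
  set A := (g : Matrix (Fin 2) (Fin 2) ℝ)
  have h := congrArg Units.val hcomm.eq
  have h00 := congrFun (congrFun h 0) 0
  have h01 := congrFun (congrFun h 0) 1
  simp only [Units.val_mul, coe_rot, mul_apply, Fin.sum_univ_two, of_apply, cons_val', cons_val_zero, cons_val_one, cons_val_fin_one,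
    neg_mul, mul_neg] at h00 h01
  have e11 : A 1 1 = A 0 0 := mul_left_cancel₀ hθ (by linarith)
  have e01 : A 0 1 = -A 1 0 := mul_left_cancel₀ hθ (by linarith)
  have hA : A.det = A 0 0 ^ 2 + A 1 0 ^ 2 := by rw [det_fin_two, e11, e01]; ring
  rw [hA, abs_of_nonneg (by positivity)] at hdet
  obtain ⟨φ, hc, hs⟩ := exists_cos_eq_and_sin_eq hdet
  refine ⟨φ, ext fun i j => ?_⟩
  fin_cases i <;> fin_cases j <;> simp [hc, hs, ← e11, ← e01, A]

lemma exists_mul_mul_inv_eq_rot {g : GL (Fin 2) ℝ}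
    (hdet : (g : Matrix (Fin 2) (Fin 2) ℝ).det = 1)
    (htr : (g : Matrix (Fin 2) (Fin 2) ℝ).trace ^ 2 < 4) :
    ∃ P : GL (Fin 2) ℝ, ∃ θ, sin θ ≠ 0 ∧ P * g * P⁻¹ = rot θ := by
  set A := (g : Matrix (Fin 2) (Fin 2) ℝ)
  rw [det_fin_two] at hdet
  rw [trace_fin_two] at htr
  have hc : A 1 0 ≠ 0 := fun h => by
    rw [h, mul_zero, sub_zero] at hdet
    nlinarith [sq_nonneg (A 0 0 - A 1 1)]
  obtain ⟨θ, hcos, hsin⟩ := exists_cos_eq_and_sin_eq (p := (A 0 0 + A 1 1) / 2)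
    (q := √(1 - ((A 0 0 + A 1 1) / 2) ^ 2)) (by rw [sq_sqrt (by nlinarith)]; ring)
  have hs : sin θ ≠ 0 := hsin ▸ (sqrt_pos.2 (by nlinarith)).ne'
  -- the columns `e₁` and `(A - cos θ) e₁ / sin θ` form a basis in which `A` acts as `rot θ`
  let Q : GL (Fin 2) ℝ := .mkOfDetNeZero !![1, (A 0 0 - cos θ) / sin θ; 0, A 1 0 / sin θ]
    (by simpa [det_fin_two] using div_ne_zero hc hs)
  have hgQ : g * Q = Q * rot θ := by
    have hpyth := sin_sq_add_cos_sq θ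
    ext i j
    fin_cases i <;> fin_cases j <;>
      simp only [Fin.zero_eta, Fin.mk_one, Units.val_mul, val_mkOfDetNeZero, coe_rot, mul_apply,
        Fin.sum_univ_two, of_apply, cons_val', cons_val_zero, cons_val_one, cons_val_fin_one, mul_one, one_mul, mul_zero, zero_mul,
        add_zero, zero_add, mul_neg, neg_zero, Q, A] <;>
      field_simp
    · ring
    · linear_combination hpyth - hdet - 2 * A 0 0 * hcos
    · linear_combination (-2 * A 1 0) * hcos
  exact ⟨Q⁻¹, θ, hs, by rw [inv_inv, mul_assoc, hgQ, ← mul_assoc, inv_mul_cancel, one_mul]⟩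

lemma coe_eq_range_rot_of_isClosed {H : Subgroup (GL (Fin 2) ℝ)}
    (hc : IsClosed (H : Set (GL (Fin 2) ℝ))) (hinf : (H : Set (GL (Fin 2) ℝ)).Infinite)
    (hsub : (H : Set (GL (Fin 2) ℝ)) ⊆ range rot) : (H : Set (GL (Fin 2) ℝ)) = range rot := by
  let S : AddSubgroup ℝ := H.toAddSubgroup.comap rotHom
  have hS : ∀ θ, θ ∈ S ↔ rot θ ∈ H := fun θ => Iff.rfl
  refine hsub.antisymm ?_
  obtain hdense | ⟨α, hα⟩ := S.dense_or_cyclic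
  · rintro _ ⟨θ, rfl⟩
    exact hc.closure_subset_iff.2 (image_subset_iff.2 fun θ hθ => (hS θ).1 hθ)
      (mem_closure_image continuous_rot.continuousAt (hdense θ))
  · have h2π : 2 * π ∈ S := (hS _).2 (rot_two_pi ▸ H.one_mem)
    rw [hα, AddSubgroup.mem_closure_singleton] at h2π
    obtain ⟨k, hk⟩ := h2π
    have hk0 : k ≠ 0 := by
      rintro rfl
      rw [zero_smul] at hk
      linarith [pi_pos]
    have hfin : IsOfFinOrder (rot α) :=
      isOfFinOrder_iff_zpow_eq_one.2 ⟨k, hk0, by rw [← rot_zsmul, hk, rot_two_pi]⟩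
    refine absurd (hfin.finite_zpowers.subset fun g hg => ?_) hinf
    obtain ⟨θ, rfl⟩ := hsub hg
    have hθ : θ ∈ S := hg
    rw [hα, AddSubgroup.mem_closure_singleton] at hθ
    obtain ⟨n, rfl⟩ := hθ
    exact ⟨n, (rot_zsmul n α).symm⟩

end GeneralLinearGroup

end Matrix

open Matrix.GeneralLinearGroup

/-- every infinite compact abelian subgroup of `GL₂(ℝ)` is conjugate in
`GL₂(ℝ)` to the rotation group `SO₂(ℝ)`. -/
theorem stmt16 (G : Subgroup (GL (Fin 2) ℝ))
    (hinf : (G : Set (GL (Fin 2) ℝ)).Infinite)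
    (hcpt : IsCompact (G : Set (GL (Fin 2) ℝ)))
    (hab : ∀ a ∈ G, ∀ b ∈ G, a * b = b * a) :
    ∃ P : GL (Fin 2) ℝ,
      (fun g => P * g * P⁻¹) '' (G : Set (GL (Fin 2) ℝ)) =
        {g : GL (Fin 2) ℝ | ∃ θ : ℝ, (g : Matrix (Fin 2) (Fin 2) ℝ) =
          !![Real.cos θ, -Real.sin θ; Real.sin θ, Real.cos θ]} := by
  obtain ⟨u, huG, hu1, htr⟩ := G.exists_mem_ne_one_mem_of_isCompact hcpt hinf
    ((isOpen_lt continuous_const (continuous_id.matrix_trace.comp Units.continuous_val)).mem_nhds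
      (show (0 : ℝ) < trace (1 : Matrix (Fin 2) (Fin 2) ℝ) by simp))
  have hdisc := trace_sq_lt_four_mul_det_of_isCompact hcpt huG hu1 htr
  have hdet : (u : Matrix (Fin 2) (Fin 2) ℝ).det = 1 := by
    have := abs_det_eq_one_of_isCompact hcpt huG
    rwa [abs_of_pos (by nlinarith)] at this
  obtain ⟨P, θ, hθ, hPu⟩ := exists_mul_mul_inv_eq_rot hdet (by rwa [hdet, mul_one] at hdisc)
  refine ⟨P, ?_⟩
  set G' := G.map (MulAut.conj P).toMonoidHom
  have hG' : (fun g => P * g * P⁻¹) '' (G : Set (GL (Fin 2) ℝ)) = G' := rfl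
  have hG'cpt : IsCompact (G' : Set (GL (Fin 2) ℝ)) := hG' ▸ hcpt.image (by fun_prop)
  rw [hG', ← range_rot]
  refine coe_eq_range_rot_of_isClosed hG'cpt.isClosed
    (hG' ▸ hinf.image (MulAut.conj P).injective.injOn) ?_
  rintro _ ⟨a, ha, rfl⟩
  refine mem_range_rot_of_commute hθ ?_ (abs_det_eq_one_of_isCompact hG'cpt ⟨a, ha, rfl⟩)
  rw [← hPu]
  exact Commute.map (hab a ha u huG) (MulAut.conj P).toMonoidHom
end
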